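/- arXiv:1902.10693 — 3 statements merged into one kernel-verified Lean document; each statement's English description precedes it below -/
import Mathlib

section
/- Let (X_n) be a sequence of independent Poisson random variables with means (μ_n) such that log n = o(μ_n) as n → ∞. Then X_n / μ_n → 1 almost surely. -/
/-!
The Chernoff bound for `Po(r)` at the optimal parameter `t = log x` gives
`Po(r) {n ≥ x r} ≤ exp (-r klFun x)` for `x ≥ 1`, and the same bound for `{n ≤ x r}` when
`x ≤ 1`, where `klFun x = x log x + 1 - x > 0` for `x ≠ 1`. Hence
`P (|X n / μ n - 1| ≥ ε) ≤ 2 exp (-c_ε μ n)` with `c_ε > 0`, and since `μ n ≥ (2 / c_ε) log n`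
eventually, these probabilities are `O(n⁻²)`. By the first Borel–Cantelli lemma, almost surely
`|X n / μ n - 1| < ε` eventually, and letting `ε` run through a sequence tending to `0` gives the
almost sure convergence.
-/

open MeasureTheory ProbabilityTheory Real Filter NNReal
open scoped Nat Topology
open InformationTheory

lemma InformationTheory.klFun_pos {x : ℝ} (hx₀ : 0 ≤ x) (hx₁ : x ≠ 1) : 0 < klFun x :=
  (klFun_nonneg hx₀).lt_of_ne' (mt (klFun_eq_zero_iff hx₀).1 hx₁)

lemma Metric.tendsto_of_forall_eventually_dist_lt {α : Type*} [PseudoMetricSpace α] {f : ℕ → α}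
    {a : α} {ε : ℕ → ℝ} (hε : Tendsto ε atTop (𝓝 0)) (h : ∀ m, ∀ᶠ n in atTop, dist (f n) a < ε m) :
    Tendsto f atTop (𝓝 a) := by
  refine Metric.tendsto_nhds.2 fun δ hδ ↦ ?_
  obtain ⟨m, hm⟩ := (hε.eventually (gt_mem_nhds hδ)).exists
  exact (h m).mono fun n hn ↦ hn.trans hm

lemma summable_exp_neg_mul_of_tendsto_div_log {u : ℕ → ℝ}
    (hu : Tendsto (fun n ↦ u n / log n) atTop atTop) {c : ℝ} (hc : 0 < c) :
    Summable fun n ↦ exp (-(u n * c)) := by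
  refine .of_norm_bounded_eventually_nat (Real.summable_nat_rpow.2 (by norm_num : (-2 : ℝ) < -1)) ?_
  filter_upwards [(hu.atTop_mul_const hc).eventually_ge_atTop 2, eventually_ge_atTop 2]
    with n hu_n hn
  have hlog : 0 < log n := log_pos (by exact_mod_cast hn)
  rw [norm_of_nonneg (exp_nonneg _), rpow_def_of_pos (by positivity), exp_le_exp]
  rw [div_mul_eq_mul_div, le_div_iff₀ hlog] at hu_n
  linarith

namespace ProbabilityTheory

lemma hasSum_poissonMeasure_mul_exp_mul (r : ℝ≥0) (t : ℝ) :
    HasSum (fun n : ℕ ↦ exp (-r) * r ^ n / n ! * exp (t * n)) (exp (r * (exp t - 1))) := by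
  have hterm : (fun n : ℕ ↦ exp (-r) * r ^ n / n ! * exp (t * n)) =
      fun n ↦ exp (-r) * ((r * exp t) ^ n / n !) := by
    ext n
    rw [mul_pow, ← exp_nat_mul, mul_comm t]
    ring
  have h := (NormedSpace.expSeries_div_hasSum_exp ((r : ℝ) * exp t)).mul_left (exp (-r))
  rw [← exp_eq_exp_ℝ, ← exp_add] at h
  rw [hterm, show (r : ℝ) * (exp t - 1) = -r + r * exp t by ring]
  exact h

lemma integrable_exp_mul_poissonMeasure (r : ℝ≥0) (t : ℝ) :
    Integrable (fun n : ℕ ↦ exp (t * n)) (poissonMeasure r) := by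
  rw [integrable_poissonMeasure_iff]
  simpa only [norm_of_nonneg (exp_nonneg _)] using
    (hasSum_poissonMeasure_mul_exp_mul r t).summable

lemma mgf_poissonMeasure (r : ℝ≥0) (t : ℝ) :
    mgf (fun n : ℕ ↦ (n : ℝ)) (poissonMeasure r) t = exp (r * (exp t - 1)) := by
  rw [mgf, integral_poissonMeasure]
  exact (hasSum_poissonMeasure_mul_exp_mul r t).tsum_eq

lemma exp_neg_log_mul_mul_mgf_poissonMeasure (r : ℝ≥0) {x : ℝ} (hx : 0 < x) :
    exp (-log x * (x * r)) * mgf (fun n : ℕ ↦ (n : ℝ)) (poissonMeasure r) (log x) =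
      exp (-(r * klFun x)) := by
  rw [mgf_poissonMeasure, exp_log hx, ← exp_add, klFun]
  ring_nf

lemma poissonMeasure_real_ge_le_exp_klFun (r : ℝ≥0) {x : ℝ} (hx : 1 ≤ x) :
    (poissonMeasure r).real {n | x * r ≤ n} ≤ exp (-(r * klFun x)) := by
  rw [← exp_neg_log_mul_mul_mgf_poissonMeasure r (by linarith)]
  exact measure_ge_le_exp_mul_mgf _ (log_nonneg hx) (integrable_exp_mul_poissonMeasure r _)

lemma poissonMeasure_real_le_le_exp_klFun (r : ℝ≥0) {x : ℝ} (hx₀ : 0 < x) (hx₁ : x ≤ 1) :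
    (poissonMeasure r).real {n | n ≤ x * r} ≤ exp (-(r * klFun x)) := by
  rw [← exp_neg_log_mul_mul_mgf_poissonMeasure r hx₀]
  exact measure_le_le_exp_mul_mgf _ (log_nonpos hx₀.le hx₁) (integrable_exp_mul_poissonMeasure r _)

lemma poissonMeasure_real_abs_div_sub_one_ge_le {r : ℝ≥0} (hr : 0 < r) {ε : ℝ} (hε₀ : 0 ≤ ε)
    (hε₁ : ε < 1) :
    (poissonMeasure r).real {n : ℕ | ε ≤ |(n : ℝ) / r - 1|} ≤
      exp (-(r * klFun (1 + ε))) + exp (-(r * klFun (1 - ε))) := by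
  have hsub : {n : ℕ | ε ≤ |(n : ℝ) / r - 1|} ⊆
      {n | (1 + ε) * r ≤ n} ∪ {n | n ≤ (1 - ε) * r} := by
    intro n (hn : ε ≤ |(n : ℝ) / r - 1|)
    have hr' : (0 : ℝ) < r := NNReal.coe_pos.2 hr
    rcases le_abs'.1 hn with h | h
    · right
      change (n : ℝ) ≤ (1 - ε) * r
      rw [← div_le_iff₀ hr']
      linarith
    · left
      change (1 + ε) * r ≤ (n : ℝ)
      rw [← le_div_iff₀ hr']
      linarith
  calc (poissonMeasure r).real {n : ℕ | ε ≤ |(n : ℝ) / r - 1|}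
      ≤ (poissonMeasure r).real ({n | (1 + ε) * r ≤ n} ∪ {n | n ≤ (1 - ε) * r}) :=
        measureReal_mono hsub
    _ ≤ _ := measureReal_union_le _ _
    _ ≤ _ := add_le_add (poissonMeasure_real_ge_le_exp_klFun r (by linarith))
        (poissonMeasure_real_le_le_exp_klFun r (by linarith) (by linarith))

end ProbabilityTheory

lemma ae_eventually_abs_div_sub_one_lt_of_map_eq_poissonMeasure {Ω : Type*} [MeasurableSpace Ω]
    {P : Measure Ω} {X : ℕ → Ω → ℕ} (hX : ∀ n, Measurable (X n)) {mu : ℕ → ℝ≥0}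
    (hdist : ∀ n, P.map (X n) = poissonMeasure (mu n))
    (hgrowth : Tendsto (fun n ↦ (mu n : ℝ) / log n) atTop atTop) {ε : ℝ} (hε₀ : 0 < ε)
    (hε₁ : ε < 1) :
    ∀ᵐ ω ∂P, ∀ᶠ n in atTop, |(X n ω : ℝ) / mu n - 1| < ε := by
  set tail : ℕ → ℝ := fun n ↦ (poissonMeasure (mu n)).real {k : ℕ | ε ≤ |(k : ℝ) / mu n - 1|}
  have hP : ∀ n, P {ω | ε ≤ |(X n ω : ℝ) / mu n - 1|} = ENNReal.ofReal (tail n) := fun n ↦ by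
    rw [ofReal_measureReal, ← hdist n, Measure.map_apply (hX n) .of_discrete]
    rfl
  have hmu : ∀ᶠ n in atTop, 0 < mu n := by
    filter_upwards [hgrowth.eventually_gt_atTop 0] with n hn
    exact pos_iff_ne_zero.2 fun h ↦ by simp [h] at hn
  have htail : Summable tail := by
    have hrate : ∀ x : ℝ, 0 ≤ x → x ≠ 1 → Summable fun n ↦ exp (-(mu n * klFun x)) :=
      fun x hx₀ hx₁ ↦ summable_exp_neg_mul_of_tendsto_div_log hgrowth (klFun_pos hx₀ hx₁)
    refine .of_norm_bounded_eventually_nat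
      ((hrate (1 + ε) (by linarith) (by linarith)).add (hrate (1 - ε) (by linarith) (by linarith))) ?_
    filter_upwards [hmu] with n hn
    rw [norm_of_nonneg measureReal_nonneg]
    exact poissonMeasure_real_abs_div_sub_one_ge_le hn hε₀.le hε₁
  have hsum : ∑' n, P {ω | ε ≤ |(X n ω : ℝ) / mu n - 1|} ≠ ⊤ := by
    simp_rw [hP]
    rw [← ENNReal.ofReal_tsum_of_nonneg (fun _ ↦ measureReal_nonneg) htail]
    exact ENNReal.ofReal_ne_top
  filter_upwards [ae_eventually_notMem hsum] with ω hω
  exact hω.mono fun n hn ↦ not_le.1 hn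

theorem stmt_3_general {Ω : Type*} [MeasureSpace Ω]
    (X : ℕ → Ω → ℕ) (hX : ∀ n, Measurable (X n))
    (mu : ℕ → ℝ≥0)
    (hdist : ∀ n, Measure.map (X n) ℙ = poissonMeasure (mu n))
    (hgrowth : Tendsto (fun n => (mu n : ℝ) / Real.log n) atTop atTop) :
    ∀ᵐ ω ∂ℙ, Tendsto (fun n => (X n ω : ℝ) / (mu n : ℝ)) atTop (nhds 1) := by
  have hε : Tendsto (fun m : ℕ ↦ 1 / ((m : ℝ) + 2)) atTop (𝓝 0) :=
    tendsto_const_nhds.div_atTop (tendsto_natCast_atTop_atTop.atTop_add tendsto_const_nhds)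
  have hall : ∀ᵐ ω ∂ℙ, ∀ m : ℕ, ∀ᶠ n in atTop, |(X n ω : ℝ) / mu n - 1| < 1 / ((m : ℝ) + 2) :=
    ae_all_iff.2 fun m ↦ ae_eventually_abs_div_sub_one_lt_of_map_eq_poissonMeasure hX hdist hgrowth
      (by positivity) ((div_lt_one (by positivity)).2 (by linarith [m.cast_nonneg (α := ℝ)]))
  filter_upwards [hall] with ω hω
  exact Metric.tendsto_of_forall_eventually_dist_lt hε (by simpa only [Real.dist_eq] using hω)

theorem stmt_3 {Ω : Type*} [MeasureSpace Ω] [IsProbabilityMeasure (ℙ : Measure Ω)]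
    (X : ℕ → Ω → ℕ) (hX : ∀ n, Measurable (X n))
    (hindep : iIndepFun X ℙ)
    (mu : ℕ → ℝ≥0) (hmu : ∀ n, 0 < mu n)
    (hdist : ∀ n, Measure.map (X n) ℙ = poissonMeasure (mu n))
    (hgrowth : Tendsto (fun n => (mu n : ℝ) / Real.log n) atTop atTop) :
    ∀ᵐ ω ∂ℙ, Tendsto (fun n => (X n ω : ℝ) / (mu n : ℝ)) atTop (nhds 1) :=
  stmt_3_general X hX mu hdist hgrowth
end

section
/- Let ρ be a measure on (0,∞) with ∫ (1-e^{-r}) ρ(dr) < ∞ and F a probability measure on [0,∞) with finite second moment. Then ∫∫∫ (1 - exp(-r v₁ v₂)) ρ(dr) F(dv₁) F(dv₂) < ∞. -/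
/-!
For `r, a ≥ 0` we have `1 - e^{-ra} ≤ (1 + a)(1 - e^{-r})`: for `a ≤ 1` by monotonicity of the
exponential, for `a ≥ 1` by Bernoulli's inequality `1 - x^a ≤ a (1 - x)`; for `r ≤ 0` the
integrand, truncated at `0` by `ENNReal.ofReal`, vanishes.
With `a = v₁ v₂` the inner double integral is at most `(1 + m²)(1 - e^{-r})`, where the first
moment `m` of `F` is finite because `v ≤ 1 + v²`.
-/

open MeasureTheory Real

lemma one_sub_exp_neg_mul_le {r a : ℝ} (hr : 0 ≤ r) (ha : 0 ≤ a) :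
    1 - exp (-(r * a)) ≤ (1 + a) * (1 - exp (-r)) := by
  have hexp : exp (-r) ≤ 1 := exp_le_one_iff.mpr (by linarith)
  rcases le_total a 1 with ha1 | ha1
  · have : exp (-r) ≤ exp (-(r * a)) := exp_le_exp.mpr (by nlinarith)
    nlinarith
  · have hbernoulli := one_add_mul_self_le_rpow_one_add
      (show (-1 : ℝ) ≤ exp (-r) - 1 by linarith [exp_pos (-r)]) ha1
    rw [add_sub_cancel, ← exp_mul, neg_mul] at hbernoulli
    nlinarith

lemma ofReal_one_sub_exp_neg_mul_le (r : ℝ) {a : ℝ} (ha : 0 ≤ a) :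
    ENNReal.ofReal (1 - exp (-(r * a))) ≤
      (1 + ENNReal.ofReal a) * ENNReal.ofReal (1 - exp (-r)) := by
  rcases le_total r 0 with hr | hr
  · rw [ENNReal.ofReal_of_nonpos]
    · exact bot_le
    · linarith [one_le_exp (show 0 ≤ -(r * a) by nlinarith)]
  · rw [← ENNReal.ofReal_one, ← ENNReal.ofReal_add zero_le_one ha,
      ← ENNReal.ofReal_mul (by linarith)]
    exact ENNReal.ofReal_le_ofReal (one_sub_exp_neg_mul_le hr ha)

lemma lintegral_ofReal_lt_top_of_lintegral_sq_lt_top {α : Type*} [MeasurableSpace α]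
    {μ : Measure α} [IsFiniteMeasure μ] {f : α → ℝ}
    (hf : ∫⁻ x, ENNReal.ofReal (f x ^ 2) ∂μ < ⊤) :
    ∫⁻ x, ENNReal.ofReal (f x) ∂μ < ⊤ := by
  calc ∫⁻ x, ENNReal.ofReal (f x) ∂μ ≤ ∫⁻ x, (1 + ENNReal.ofReal (f x ^ 2)) ∂μ := by
        refine lintegral_mono fun x => ?_
        rw [← ENNReal.ofReal_one, ← ENNReal.ofReal_add zero_le_one (sq_nonneg _)]
        exact ENNReal.ofReal_le_ofReal (by nlinarith [sq_nonneg (f x - 1)])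
    _ = μ Set.univ + ∫⁻ x, ENNReal.ofReal (f x ^ 2) ∂μ := by
        rw [lintegral_add_left measurable_const, lintegral_const, one_mul]
    _ < ⊤ := ENNReal.add_lt_top.mpr ⟨measure_lt_top μ _, hf⟩

lemma lintegral_lintegral_one_add_mul {α : Type*} [MeasurableSpace α]
    (μ : Measure α) [IsProbabilityMeasure μ] {f : α → ENNReal} (hf : Measurable f) :
    ∫⁻ x, ∫⁻ y, (1 + f x * f y) ∂μ ∂μ = 1 + (∫⁻ x, f x ∂μ) ^ 2 := by
  have inner (x : α) : ∫⁻ y, (1 + f x * f y) ∂μ = 1 + f x * ∫⁻ y, f y ∂μ := by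
    rw [lintegral_add_left measurable_const, lintegral_const_mul _ hf, lintegral_const,
      measure_univ, one_mul]
  simp_rw [inner]
  rw [lintegral_add_left measurable_const, lintegral_const, measure_univ, one_mul,
    lintegral_mul_const _ hf, sq]

theorem stmt_5_general (ρ : Measure ℝ) (F : Measure ℝ) [IsProbabilityMeasure F]
    (hρ : ∫⁻ r, ENNReal.ofReal (1 - Real.exp (-r)) ∂ρ < ⊤)
    (hF_supp : F (Set.Iio 0) = 0)
    (hF : ∫⁻ v, ENNReal.ofReal (v ^ 2) ∂F < ⊤) :
    ∫⁻ r, ∫⁻ v₁, ∫⁻ v₂, ENNReal.ofReal (1 - Real.exp (-(r * v₁ * v₂))) ∂F ∂F ∂ρ < ⊤ := by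
  set m := ∫⁻ v, ENNReal.ofReal v ∂F
  have hm : m < ⊤ := lintegral_ofReal_lt_top_of_lintegral_sq_lt_top hF
  have hF_nonneg : ∀ᵐ v ∂F, 0 ≤ v := by
    rw [ae_iff]
    simp only [not_le]
    exact hF_supp
  have inner (r : ℝ) : ∫⁻ v₁, ∫⁻ v₂, ENNReal.ofReal (1 - exp (-(r * v₁ * v₂))) ∂F ∂F ≤
      (1 + m ^ 2) * ENNReal.ofReal (1 - exp (-r)) := by
    calc _ ≤ ∫⁻ v₁, ∫⁻ v₂, (1 + ENNReal.ofReal v₁ * ENNReal.ofReal v₂) *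
            ENNReal.ofReal (1 - exp (-r)) ∂F ∂F := by
          refine lintegral_mono_ae (hF_nonneg.mono fun v₁ hv₁ => ?_)
          refine lintegral_mono_ae (hF_nonneg.mono fun v₂ hv₂ => ?_)
          rw [mul_assoc, ← ENNReal.ofReal_mul hv₁]
          exact ofReal_one_sub_exp_neg_mul_le r (mul_nonneg hv₁ hv₂)
      _ = (1 + m ^ 2) * ENNReal.ofReal (1 - exp (-r)) := by
          simp_rw [lintegral_mul_const' _ _ ENNReal.ofReal_ne_top]
          rw [lintegral_lintegral_one_add_mul F ENNReal.measurable_ofReal]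
  calc _ ≤ ∫⁻ r, (1 + m ^ 2) * ENNReal.ofReal (1 - exp (-r)) ∂ρ := lintegral_mono inner
    _ < ⊤ := by
      rw [lintegral_const_mul' _ _ (by finiteness)]
      exact ENNReal.mul_lt_top (by finiteness) hρ

theorem stmt_5 (ρ : Measure ℝ) (F : Measure ℝ) [IsProbabilityMeasure F]
    (hρ_supp : ρ (Set.Iic 0) = 0)
    (hρ : ∫⁻ r, ENNReal.ofReal (1 - Real.exp (-r)) ∂ρ < ⊤)
    (hF_supp : F (Set.Iio 0) = 0)
    (hF : ∫⁻ v, ENNReal.ofReal (v ^ 2) ∂F < ⊤) :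
    ∫⁻ r, ∫⁻ v₁, ∫⁻ v₂, ENNReal.ofReal (1 - Real.exp (-(r * v₁ * v₂))) ∂F ∂F ∂ρ < ⊤ :=
  stmt_5_general ρ F hρ hF_supp hF
end

section
/- Let Ψ : ℕ → (0,∞) be non-decreasing with Ψ(n) → ∞, and suppose Ψ(n) ~ ℓ(n²) as n → ∞ for a slowly varying function ℓ. Let (K_n) be a non-decreasing sequence of Poisson random variables with E[K_n] = Ψ(n) (each defined on a common probability space). Then K_n / Ψ(n) → 1 almost surely as n → ∞. -/
open MeasureTheory ProbabilityTheory Real Filter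
open scoped Nat NNReal ENNReal

lemma psum0 (c : ℝ) : HasSum (fun k : ℕ => c ^ k / k !) (Real.exp c) := by
  rw [exp_eq_exp_ℝ]
  exact NormedSpace.expSeries_div_hasSum_exp c

lemma psum1 (c : ℝ) : HasSum (fun k : ℕ => (k : ℝ) * (c ^ k / k !)) (c * Real.exp c) := by
  have h := (psum0 c).mul_left c
  have he : (fun k : ℕ => c * (c ^ k / k !)) =
      (fun k : ℕ => ((k + 1 : ℕ) : ℝ) * (c ^ (k + 1) / (k + 1)!)) := by
    funext k
    have hk : ((k)! : ℝ) ≠ 0 := by positivity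
    rw [Nat.factorial_succ]
    push_cast
    field_simp
    ring
  rw [he] at h
  have h2 := (hasSum_nat_add_iff (f := fun k : ℕ => (k : ℝ) * (c ^ k / k !)) 1).mp h
  simpa using h2

lemma psum2 (c : ℝ) :
    HasSum (fun k : ℕ => (k : ℝ) * ((k : ℝ) - 1) * (c ^ k / k !)) (c ^ 2 * Real.exp c) := by
  have h := (psum0 c).mul_left (c ^ 2)
  have he : (fun k : ℕ => c ^ 2 * (c ^ k / k !)) =
      (fun k : ℕ => ((k + 2 : ℕ) : ℝ) * (((k + 2 : ℕ) : ℝ) - 1) * (c ^ (k + 2) / (k + 2)!)) := by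
    funext k
    have hk : ((k)! : ℝ) ≠ 0 := by positivity
    rw [Nat.factorial_succ, Nat.factorial_succ]
    push_cast
    field_simp
    ring
  rw [he] at h
  have h2 := (hasSum_nat_add_iff (f := fun k : ℕ => (k : ℝ) * ((k : ℝ) - 1) * (c ^ k / k !)) 2).mp h
  simpa [Finset.sum_range_succ] using h2

lemma poisson_var (r : ℝ≥0) :
    HasSum (fun k : ℕ => ((k : ℝ) - r) ^ 2 * poissonPMFReal r k) (r : ℝ) := by
  set c : ℝ := (r : ℝ) with hc
  have h := ((psum2 c).add (((psum1 c).mul_left (1 - 2 * c)).add ((psum0 c).mul_left (c ^ 2)))).mul_left (Real.exp (-c))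
  have he : (fun k : ℕ => Real.exp (-c) * ((k : ℝ) * ((k : ℝ) - 1) * (c ^ k / k !) +
      ((1 - 2 * c) * ((k : ℝ) * (c ^ k / k !)) + c ^ 2 * (c ^ k / k !)))) =
      (fun k : ℕ => ((k : ℝ) - c) ^ 2 * poissonPMFReal r k) := by
    funext k
    unfold poissonPMFReal
    rw [← hc]
    ring
  rw [he] at h
  have hv : Real.exp (-c) * (c ^ 2 * Real.exp c + ((1 - 2 * c) * (c * Real.exp c) + c ^ 2 * Real.exp c)) = c := by
    rw [Real.exp_neg]
    field_simp
    ring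
  rwa [hv] at h

lemma poisson_cheb (r : ℝ≥0) (hr : 0 < (r : ℝ)) {ε : ℝ} (hε : 0 < ε) :
    poissonMeasure r {k : ℕ | ε * r ≤ |(k : ℝ) - r|} ≤ ENNReal.ofReal (1 / (ε ^ 2 * r)) := by
  set S : Set ℕ := {k : ℕ | ε * r ≤ |(k : ℝ) - r|} with hS
  have hmeas : MeasurableSet S := .of_discrete
  have hεr : (0 : ℝ) < ε * r := by positivity
  have hPo : poissonMeasure r S = ∑' k, S.indicator (fun n => ENNReal.ofReal (poissonPMFReal r n)) k := by
    rw [poissonMeasure, Measure.sum_apply _ hmeas]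
    congr 1; funext n
    by_cases hn : n ∈ S
    · simp [Measure.smul_apply, Measure.dirac_apply' _ hmeas, hn, poissonPMFReal]
    · simp [Measure.smul_apply, Measure.dirac_apply' _ hmeas, hn]
  rw [hPo]
  have hg : HasSum (fun k : ℕ => ((k : ℝ) - r) ^ 2 / (ε * r) ^ 2 * poissonPMFReal r k)
      ((r : ℝ) / (ε * r) ^ 2) := by
    have := (poisson_var r).mul_left ((ε * r) ^ 2)⁻¹
    simpa [div_eq_inv_mul, mul_assoc] using this
  have hgnn : ∀ k : ℕ, 0 ≤ ((k : ℝ) - r) ^ 2 / (ε * r) ^ 2 * poissonPMFReal r k := by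
    intro k
    have := poissonPMFReal_nonneg (r := r) (n := k)
    positivity
  calc ∑' k, S.indicator (fun n => ENNReal.ofReal (poissonPMFReal r n)) k
      ≤ ∑' k : ℕ, ENNReal.ofReal (((k : ℝ) - r) ^ 2 / (ε * r) ^ 2 * poissonPMFReal r k) := by
        apply ENNReal.tsum_le_tsum
        intro k
        rcases em (k ∈ S) with hk | hk
        · rw [Set.indicator_of_mem hk]
          show ENNReal.ofReal (poissonPMFReal r k) ≤ _
          apply ENNReal.ofReal_le_ofReal
          have h1 : (1 : ℝ) ≤ ((k : ℝ) - r) ^ 2 / (ε * r) ^ 2 := by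
            rw [le_div_iff₀ (by positivity), one_mul]
            calc (ε * r) ^ 2 = (ε * r) * (ε * r) := sq (ε*r) ▸ rfl
            _ ≤ |(k : ℝ) - r| * |(k : ℝ) - r| := by
                apply mul_le_mul hk hk (le_of_lt hεr) (abs_nonneg _)
            _ = ((k : ℝ) - r) ^ 2 := by rw [← abs_mul, ← sq, abs_sq]
          nlinarith [poissonPMFReal_nonneg (r := r) (n := k), h1]
        · rw [Set.indicator_of_notMem hk]
          exact zero_le
    _ = ENNReal.ofReal ((r : ℝ) / (ε * r) ^ 2) := by
        rw [← ENNReal.ofReal_tsum_of_nonneg hgnn hg.summable, hg.tsum_eq]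
    _ = ENNReal.ofReal (1 / (ε ^ 2 * r)) := by
        congr 1
        field_simp

theorem stmt_18 {Ω : Type*} [MeasureSpace Ω] [IsProbabilityMeasure (ℙ : Measure Ω)]
    (Ψ : ℕ → ℝ) (hΨ_pos : ∀ n, 0 < Ψ n) (hΨ_mono : Monotone Ψ)
    (hΨ_top : Tendsto Ψ atTop atTop)
    (ℓ : ℝ → ℝ) (hℓ_pos : ∀ t, 0 < t → 0 < ℓ t)
    (hℓ_slow : ∀ a : ℝ, 0 < a → Tendsto (fun t => ℓ (a * t) / ℓ t) atTop (nhds 1))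
    (hΨ_equiv : Tendsto (fun n : ℕ => Ψ n / ℓ ((n : ℝ) ^ 2)) atTop (nhds 1))
    (K : ℕ → Ω → ℕ) (hK_meas : ∀ n, Measurable (K n))
    (hK_dist : ∀ n, Measure.map (K n) ℙ = poissonMeasure (Ψ n).toNNReal)
    (hK_mono : ∀ᵐ ω ∂ℙ, Monotone (fun n => K n ω)) :
    ∀ᵐ ω ∂ℙ, Tendsto (fun n => (K n ω : ℝ) / Ψ n) atTop (nhds 1) := by
  -- (L0): Ψ(2n)/Ψ(n) → 1
  have hsq : Tendsto (fun n : ℕ => ((n : ℝ)) ^ 2) atTop atTop :=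
    (tendsto_pow_atTop (two_ne_zero)).comp tendsto_natCast_atTop_atTop
  have h2n : Tendsto (fun n : ℕ => 2 * n) atTop atTop := by
    apply tendsto_atTop.mpr
    intro b
    filter_upwards [eventually_ge_atTop b] with n hn
    omega
  have hL0 : Tendsto (fun n : ℕ => Ψ (2 * n) / Ψ n) atTop (nhds 1) := by
    have hA : Tendsto (fun n : ℕ => Ψ (2 * n) / ℓ (((2 * n : ℕ) : ℝ) ^ 2)) atTop (nhds 1) :=
      hΨ_equiv.comp h2n
    have hB : Tendsto (fun n : ℕ => ℓ (4 * (n : ℝ) ^ 2) / ℓ ((n : ℝ) ^ 2)) atTop (nhds 1) :=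
      (hℓ_slow 4 (by norm_num)).comp hsq
    have hC : Tendsto (fun n : ℕ => (Ψ n / ℓ ((n : ℝ) ^ 2))⁻¹) atTop (nhds 1) := by
      simpa using hΨ_equiv.inv₀ one_ne_zero
    have hcomb := (hA.mul hB).mul hC
    rw [show (1 : ℝ) * 1 * 1 = 1 by ring] at hcomb
    apply hcomb.congr'
    filter_upwards [eventually_ge_atTop 1] with n hn
    have hn0 : (0 : ℝ) < (n : ℝ) := by exact_mod_cast hn
    have hcast : ((2 * n : ℕ) : ℝ) ^ 2 = 4 * (n : ℝ) ^ 2 := by push_cast; ring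
    have hl1 : ℓ ((n : ℝ) ^ 2) ≠ 0 := ne_of_gt (hℓ_pos _ (by positivity))
    have hl2 : ℓ (4 * (n : ℝ) ^ 2) ≠ 0 := ne_of_gt (hℓ_pos _ (by positivity))
    have hd : Ψ n ≠ 0 := ne_of_gt (hΨ_pos n)
    rw [hcast]
    field_simp
    try ring
  -- the subsequence N
  have hex : ∀ r : ℕ, ∃ n, ((r : ℝ) + 1) ^ 2 ≤ Ψ n := fun r =>
    (hΨ_top.eventually_ge_atTop _).exists
  set N : ℕ → ℕ := fun r => Nat.find (hex r) with hN
  have hNge : ∀ r : ℕ, ((r : ℝ) + 1) ^ 2 ≤ Ψ (N r) := fun r => Nat.find_spec (hex r)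
  have hNmin : ∀ r m, m < N r → Ψ m < ((r : ℝ) + 1) ^ 2 := fun r m hm =>
    lt_of_not_ge (Nat.find_min (hex r) hm)
  have hNmono : Monotone N := by
    intro r s hrs
    apply Nat.find_min'
    refine le_trans ?_ (hNge s)
    have : (r : ℝ) ≤ (s : ℝ) := Nat.cast_le.mpr hrs
    nlinarith [Nat.cast_nonneg (α := ℝ) r]
  have hNunb : ∀ n, ∃ r, n < N r := by
    intro n
    obtain ⟨r, hr⟩ := exists_nat_gt (Ψ n)
    refine ⟨r, ?_⟩
    by_contra hle
    push_neg at hle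
    have h1 : Ψ (N r) ≤ Ψ n := hΨ_mono hle
    have h2 := hNge r
    have : (r : ℝ) ≤ ((r : ℝ) + 1) ^ 2 := by nlinarith [Nat.cast_nonneg (α := ℝ) r]
    linarith
  have hNtop : Tendsto N atTop atTop :=
    tendsto_atTop_atTop_of_monotone hNmono (fun b => ⟨(hNunb b).choose, ((hNunb b).choose_spec).le⟩)
  have hN1top : Tendsto (fun r => N (r + 1)) atTop atTop := hNtop.comp (tendsto_add_atTop_nat 1)
  -- (L1): Ψ(N(r+1))/Ψ(N r) → 1
  have hL1 : Tendsto (fun r : ℕ => Ψ (N (r + 1)) / Ψ (N r)) atTop (nhds 1) := by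
    have hNm1top : Tendsto (fun r : ℕ => N (r + 1) - 1) atTop atTop := by
      apply tendsto_atTop.mpr
      intro b
      filter_upwards [hN1top.eventually_ge_atTop (b + 1)] with r hr
      omega
    have t2 : Tendsto (fun r : ℕ => ((r : ℝ) + 2) ^ 2 / ((r : ℝ) + 1) ^ 2) atTop (nhds 1) := by
      have h0 : Tendsto (fun r : ℕ => 1 + 1 / ((r : ℝ) + 1)) atTop (nhds 1) := by
        simpa using (tendsto_const_nhds (x := (1:ℝ))).add tendsto_one_div_add_atTop_nhds_zero_nat
      have := (h0.pow 2)
      rw [show ((1:ℝ)) ^ 2 = 1 by norm_num] at this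
      apply this.congr
      intro r
      have : ((r : ℝ) + 1) ≠ 0 := by positivity
      rw [← div_pow]
      congr 1
      field_simp
      try ring
    have hfr : Tendsto (fun r : ℕ => (Ψ (2 * (N (r + 1) - 1)) / Ψ (N (r + 1) - 1)) *
        (((r : ℝ) + 2) ^ 2 / ((r : ℝ) + 1) ^ 2)) atTop (nhds 1) := by
      simpa using (hL0.comp hNm1top).mul t2
    apply tendsto_of_tendsto_of_tendsto_of_le_of_le' tendsto_const_nhds hfr
    · filter_upwards with r
      exact (one_le_div (hΨ_pos _)).mpr (hΨ_mono (hNmono (Nat.le_succ r)))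
    · filter_upwards [hN1top.eventually_ge_atTop 2] with r hr2
      set m := N (r + 1) - 1 with hm
      have hNr1 : N (r + 1) = m + 1 := by omega
      have h1 : Ψ (N (r + 1)) ≤ Ψ (2 * m) := hΨ_mono (by omega)
      have h2 : Ψ m < ((r : ℝ) + 2) ^ 2 := by
        have := hNmin (r + 1) m (by omega)
        push_cast at this
        convert this using 2
        ring
      have h3 : ((r : ℝ) + 1) ^ 2 ≤ Ψ (N r) := hNge r
      calc Ψ (N (r + 1)) / Ψ (N r) ≤ Ψ (2 * m) / ((r : ℝ) + 1) ^ 2 :=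
            div_le_div₀ (hΨ_pos _).le h1 (by positivity) h3
        _ = (Ψ (2 * m) / Ψ m) * (Ψ m / ((r : ℝ) + 1) ^ 2) := by
            rw [div_mul_div_comm, mul_comm (Ψ m), mul_div_mul_right _ _ (ne_of_gt (hΨ_pos m))]
        _ ≤ (Ψ (2 * m) / Ψ m) * (((r : ℝ) + 2) ^ 2 / ((r : ℝ) + 1) ^ 2) :=
            mul_le_mul_of_nonneg_left
              (div_le_div₀ (by positivity) h2.le (by positivity) le_rfl)
              (div_nonneg (hΨ_pos _).le (hΨ_pos _).le)
  -- Borel–Cantelli along the subsequence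
  have key : ∀ j : ℕ, ∀ᵐ ω ∂ℙ, ∀ᶠ r in atTop,
      ω ∉ {ω' | (1 / ((j : ℝ) + 1)) * Ψ (N r) ≤ |(K (N r) ω' : ℝ) - Ψ (N r)|} := by
    intro j
    set ε : ℝ := 1 / ((j : ℝ) + 1) with hεdef
    have hε : 0 < ε := by positivity
    apply ae_eventually_notMem
    have hbound : ∀ r : ℕ, ℙ {ω' | ε * Ψ (N r) ≤ |(K (N r) ω' : ℝ) - Ψ (N r)|} ≤
        ENNReal.ofReal (1 / (ε ^ 2 * ((r : ℝ) + 1) ^ 2)) := by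
      intro r
      have hpos := hΨ_pos (N r)
      have hcoe : (((Ψ (N r)).toNNReal : ℝ)) = Ψ (N r) := Real.coe_toNNReal _ hpos.le
      have hset : {ω' | ε * Ψ (N r) ≤ |(K (N r) ω' : ℝ) - Ψ (N r)|} =
          K (N r) ⁻¹' {k : ℕ | ε * ((Ψ (N r)).toNNReal : ℝ) ≤ |(k : ℝ) - ((Ψ (N r)).toNNReal : ℝ)|} := by
        rw [hcoe]
        rfl
      rw [hset, ← Measure.map_apply (hK_meas _) .of_discrete, hK_dist]
      refine le_trans (poisson_cheb _ (by rw [hcoe]; exact hpos) hε) ?_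
      apply ENNReal.ofReal_le_ofReal
      apply one_div_le_one_div_of_le (by positivity)
      rw [hcoe]
      gcongr
      exact hNge r
    apply ne_of_lt
    apply lt_of_le_of_lt (ENNReal.tsum_le_tsum hbound)
    have hsum2 : Summable (fun r : ℕ => 1 / ((r : ℝ) + 1) ^ 2) := by
      have h0 : Summable (fun n : ℕ => 1 / (n : ℝ) ^ 2) :=
        Real.summable_one_div_nat_pow.mpr one_lt_two
      have := (summable_nat_add_iff 1).mpr h0
      apply this.congr
      intro r
      push_cast
      ring
    have hsum : Summable (fun r : ℕ => 1 / (ε ^ 2 * ((r : ℝ) + 1) ^ 2)) := by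
      apply (hsum2.mul_left (1 / ε ^ 2)).congr
      intro r
      rw [div_mul_div_comm, one_mul]
    rw [← ENNReal.ofReal_tsum_of_nonneg (fun r => by positivity) hsum]
    exact ENNReal.ofReal_lt_top
  have hBC : ∀ᵐ ω ∂ℙ, ∀ j : ℕ, ∀ᶠ r in atTop,
      ω ∉ {ω' | (1 / ((j : ℝ) + 1)) * Ψ (N r) ≤ |(K (N r) ω' : ℝ) - Ψ (N r)|} :=
    ae_all_iff.mpr key
  -- combine
  filter_upwards [hK_mono, hBC] with ω hω hBCω
  -- subsequence convergence for this ω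
  have hsub : Tendsto (fun r : ℕ => (K (N r) ω : ℝ) / Ψ (N r)) atTop (nhds 1) := by
    rw [Metric.tendsto_atTop]
    intro ε hε
    obtain ⟨j, hj⟩ := exists_nat_one_div_lt hε
    obtain ⟨R0, hR0⟩ := eventually_atTop.mp (hBCω j)
    refine ⟨R0, fun r hr => ?_⟩
    have hpos := hΨ_pos (N r)
    have hlt : |(K (N r) ω : ℝ) - Ψ (N r)| < (1 / ((j : ℝ) + 1)) * Ψ (N r) :=
      lt_of_not_ge (hR0 r hr)
    rw [Real.dist_eq]
    have heq : (K (N r) ω : ℝ) / Ψ (N r) - 1 = ((K (N r) ω : ℝ) - Ψ (N r)) / Ψ (N r) := by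
      field_simp
    rw [heq, abs_div, abs_of_pos hpos, div_lt_iff₀ hpos]
    calc |(K (N r) ω : ℝ) - Ψ (N r)| < (1 / ((j : ℝ) + 1)) * Ψ (N r) := hlt
      _ ≤ ε * Ψ (N r) := mul_le_mul_of_nonneg_right hj.le hpos.le
  -- the interpolation index
  set R : ℕ → ℕ := fun n => Nat.find (hNunb n) with hR
  have hRspec : ∀ n, n < N (R n) := fun n => Nat.find_spec (hNunb n)
  have hRmin : ∀ n r, r < R n → N r ≤ n := fun n r hr => le_of_not_gt (Nat.find_min (hNunb n) hr)
  set rr : ℕ → ℕ := fun n => R n - 1 with hrr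
  have hev : ∀ᶠ n in atTop, N (rr n) ≤ n ∧ n < N (rr n + 1) := by
    filter_upwards [eventually_ge_atTop (N 0)] with n hn
    have hdef : rr n = R n - 1 := rfl
    have hR1 : 1 ≤ R n := by
      rcases Nat.eq_zero_or_pos (R n) with h | h
      · exfalso
        have h2 := hRspec n
        rw [h] at h2
        omega
      · exact h
    have h1 : N (rr n) ≤ n := hRmin n (rr n) (by omega)
    have h2 : n < N (rr n + 1) := by
      have heq : rr n + 1 = R n := by omega
      rw [heq]
      exact hRspec n
    exact ⟨h1, h2⟩
  have hrrtop : Tendsto rr atTop atTop := by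
    apply tendsto_atTop.mpr
    intro b
    filter_upwards [eventually_ge_atTop (N (b + 1))] with n hn
    have hdef : rr n = R n - 1 := rfl
    have hlt : b + 1 < R n := by
      by_contra h
      push_neg at h
      have h3 : N (R n) ≤ N (b + 1) := hNmono h
      have h4 := hRspec n
      omega
    omega
  -- bounding sequences
  have hL1' : Tendsto (fun r : ℕ => Ψ (N r) / Ψ (N (r + 1))) atTop (nhds 1) := by
    have := hL1.inv₀ one_ne_zero
    simpa [inv_div] using this
  have hlow : Tendsto (fun r : ℕ => ((K (N r) ω : ℝ) / Ψ (N r)) * (Ψ (N r) / Ψ (N (r + 1))))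
      atTop (nhds 1) := by simpa using hsub.mul hL1'
  have hup : Tendsto (fun r : ℕ => ((K (N (r + 1)) ω : ℝ) / Ψ (N (r + 1))) * (Ψ (N (r + 1)) / Ψ (N r)))
      atTop (nhds 1) := by simpa using (hsub.comp (tendsto_add_atTop_nat 1)).mul hL1
  apply tendsto_of_tendsto_of_tendsto_of_le_of_le' (hlow.comp hrrtop) (hup.comp hrrtop)
  · filter_upwards [hev] with n hn
    obtain ⟨h1, h2⟩ := hn
    show ((K (N (rr n)) ω : ℝ) / Ψ (N (rr n))) * (Ψ (N (rr n)) / Ψ (N (rr n + 1))) ≤ (K n ω : ℝ) / Ψ n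
    have hcancel : ((K (N (rr n)) ω : ℝ) / Ψ (N (rr n))) * (Ψ (N (rr n)) / Ψ (N (rr n + 1))) =
        (K (N (rr n)) ω : ℝ) / Ψ (N (rr n + 1)) := by
      rw [div_mul_div_comm, mul_comm (Ψ (N (rr n))), mul_div_mul_right _ _ (ne_of_gt (hΨ_pos (N (rr n))))]
    rw [hcancel]
    apply div_le_div₀ (Nat.cast_nonneg _) _ (hΨ_pos n) (hΨ_mono h2.le)
    exact_mod_cast hω h1
  · filter_upwards [hev] with n hn
    obtain ⟨h1, h2⟩ := hn
    show (K n ω : ℝ) / Ψ n ≤ ((K (N (rr n + 1)) ω : ℝ) / Ψ (N (rr n + 1))) * (Ψ (N (rr n + 1)) / Ψ (N (rr n)))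
    have hcancel : ((K (N (rr n + 1)) ω : ℝ) / Ψ (N (rr n + 1))) * (Ψ (N (rr n + 1)) / Ψ (N (rr n))) =
        (K (N (rr n + 1)) ω : ℝ) / Ψ (N (rr n)) := by
      rw [div_mul_div_comm, mul_comm (Ψ (N (rr n + 1))) (Ψ (N (rr n))),
        mul_div_mul_right _ _ (ne_of_gt (hΨ_pos (N (rr n + 1))))]
    rw [hcancel]
    apply div_le_div₀ (Nat.cast_nonneg _) _ (hΨ_pos (N (rr n))) (hΨ_mono h1)
    exact_mod_cast hω h2.le
end
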